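/- Let t_0 ∈ 𝕋 and s_0, s_1 ∈ ℂ. There exists a function f ∈ 𝒮 such that f(z) = s_0 + s_1(z − t_0) + o(|z − t_0|) as z →∠ t_0 if and only if either (1) |s_0| < 1, or (2) |s_0| = 1 and t_0·s_1·conj(s_0) is a nonnegative real number. Moreover, such a function is unique if and only if |s_0| = 1 and s_1 = 0, and in that case the unique such function is the constant function identically equal to s_0. -/

import Mathlib

open Complex Filter Matrix Metric Set Asymptotics
open scoped ComplexConjugate ComplexOrder Topology

noncomputable section

/-- The open unit disk in `ℂ`. -/
def unitDisk : Set ℂ := Metric.ball (0 : ℂ) 1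

/-- The Schur class: functions analytic on the open unit disk, bounded by one in modulus there. -/
def SchurClass : Set (ℂ → ℂ) :=
  {f | DifferentiableOn ℂ f unitDisk ∧ ∀ z ∈ unitDisk, ‖f z‖ ≤ 1}

/-- Stolz angle at a boundary point `t0` with aperture `κ`. -/
def stolzAngle (t0 : ℂ) (κ : ℝ) : Set ℂ :=
  {z ∈ unitDisk | ‖z - t0‖ < κ * (1 - ‖z‖)}

/-- `g z → L` as `z → t0` nontangentially. -/
def NTTendsto (g : ℂ → ℂ) (t0 L : ℂ) : Prop :=
  ∀ κ : ℝ, 1 < κ → Filter.Tendsto g (nhdsWithin t0 (stolzAngle t0 κ)) (nhds L)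

/-- The boundary derivative `f_j(t0)` exists and equals `s`. -/
def HasBDeriv (f : ℂ → ℂ) (t0 : ℂ) (j : ℕ) (s : ℂ) : Prop :=
  NTTendsto (fun z => iteratedDeriv j f z / (Nat.factorial j : ℂ)) t0 s

/-- `f` is a solution of the boundary interpolation problem `BP_N` with data `t0`, `s`. -/
def SolvesBP (t0 : ℂ) (s : ℕ → ℂ) (N : ℕ) (f : ℂ → ℂ) : Prop :=
  f ∈ SchurClass ∧ ∀ j ≤ N, HasBDeriv f t0 j (s j)

/-- `g = o(h)` as `z → t0` nontangentially. -/
def NTLittleO (g h : ℂ → ℂ) (t0 : ℂ) : Prop :=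
  ∀ κ : ℝ, 1 < κ → g =o[nhdsWithin t0 (stolzAngle t0 κ)] h

/-- restrictions to the unit disk of the solutions of `BP_N` -/
def solSet (t0 : ℂ) (s : ℕ → ℂ) (N : ℕ) : Set (unitDisk → ℂ) :=
  {g | ∃ f, SolvesBP t0 s N f ∧ g = unitDisk.restrict f}

/-- The (1-indexed) `(j, l)` entry of the structured matrix `Ψ_n(t0)`. -/
def PsiEntry (t0 : ℂ) (j l : ℕ) : ℂ :=
  if j ≤ l then (-1 : ℂ) ^ (l - 1) * ((l - 1).choose (j - 1) : ℂ) * t0 ^ (l + j - 1) else 0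

/-- The (1-indexed) entry `p^s_{ij}` of the structured matrix `ℙ^s_n = H^s_n Ψ_n(t0) (U^s_n)^*`. -/
def pEntry (t0 : ℂ) (s : ℕ → ℂ) (i j : ℕ) : ℂ :=
  ∑ r ∈ Finset.Icc 1 j,
    (∑ l ∈ Finset.Icc 1 r, s (i + l - 1) * PsiEntry t0 l r) * conj (s (j - r))

/-- The structured matrix `ℙ^s_n = H^s_n Ψ_n(t0) (U^s_n)^*`. -/
def Pmat (t0 : ℂ) (s : ℕ → ℂ) (n : ℕ) : Matrix (Fin n) (Fin n) ℂ :=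
  Matrix.of fun i j => pEntry t0 s ((i : ℕ) + 1) ((j : ℕ) + 1)

/-- The augmented `n × (n+1)` matrix `[ℙ^s_n  B_n]`. -/
def PmatAug (t0 : ℂ) (s : ℕ → ℂ) (n : ℕ) : Matrix (Fin n) (Fin (n + 1)) ℂ :=
  Matrix.of fun i j => pEntry t0 s ((i : ℕ) + 1) ((j : ℕ) + 1)

/-- The lower triangular Toeplitz matrix `U^s_n`. -/
def Umat (s : ℕ → ℂ) (n : ℕ) : Matrix (Fin n) (Fin n) ℂ :=
  Matrix.of fun i j => if (j : ℕ) ≤ (i : ℕ) then s ((i : ℕ) - (j : ℕ)) else 0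

/-- `f` coincides on the unit disk with a finite Blaschke product of degree `d`. -/
def IsBlaschke (f : ℂ → ℂ) (d : ℕ) : Prop :=
  ∃ (c : ℂ) (a : Fin d → ℂ), ‖c‖ = 1 ∧ (∀ k, a k ∈ unitDisk) ∧
    ∀ z ∈ unitDisk, f z = c * ∏ k, (z - a k) / (1 - conj (a k) * z)

/-- Wirtinger derivative `∂/∂z`. -/
def wdz (u : ℂ → ℂ) : ℂ → ℂ :=
  fun z => (fderiv ℝ u z 1 - Complex.I * fderiv ℝ u z Complex.I) / 2

/-- Wirtinger derivative `∂/∂z̄`. -/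
def wdzbar (u : ℂ → ℂ) : ℂ → ℂ :=
  fun z => (fderiv ℝ u z 1 + Complex.I * fderiv ℝ u z Complex.I) / 2

/-- The kernel `(1 - |f(z)|²)/(1 - |z|²)`, regarded as a complex-valued function. -/
def spKernel (f : ℂ → ℂ) : ℂ → ℂ :=
  fun z => (((1 - ‖f z‖ ^ 2) / (1 - ‖z‖ ^ 2) : ℝ) : ℂ)

/-- `∂^{i+j}/∂z^i ∂z̄^j [(1 - |f(z)|²)/(1 - |z|²)]`. -/
def spDeriv (f : ℂ → ℂ) (i j : ℕ) : ℂ → ℂ := wdz^[i] (wdzbar^[j] (spKernel f))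

/-- The Schwarz–Pick matrix `P^f_n(z)`. -/
def SchwarzPick (f : ℂ → ℂ) (n : ℕ) (z : ℂ) : Matrix (Fin n) (Fin n) ℂ :=
  Matrix.of fun i j =>
    (1 / ((Nat.factorial (i : ℕ) : ℂ) * (Nat.factorial (j : ℕ) : ℂ))) * spDeriv f i j z

/-- The class `𝒮^{(n)}(t0)` of Schur functions satisfying a higher order
Carathéodory–Julia condition at `t0`. -/
def SchurN (n : ℕ) (t0 : ℂ) : Set (ℂ → ℂ) :=
  {f | f ∈ SchurClass ∧
    Filter.liminf (fun z => ((spDeriv f (n - 1) (n - 1) z).re : EReal))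
      (nhdsWithin t0 unitDisk) < ⊤}

/-- The Jordan-type matrix `T` with diagonal `t0` and subdiagonal `1`. -/
def Tmat (t0 : ℂ) (n : ℕ) : Matrix (Fin n) (Fin n) ℂ :=
  Matrix.of fun i j =>
    if (i : ℕ) = (j : ℕ) then t0 else if (i : ℕ) = (j : ℕ) + 1 then 1 else 0

/-- The column `E = (1,0,…,0)ᵀ`. -/
def Evec (n : ℕ) : Matrix (Fin n) (Fin 1) ℂ :=
  Matrix.of fun i _ => if (i : ℕ) = 0 then 1 else 0

/-- The column `M = (s_0,…,s_{n−1})ᵀ`. -/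
def Mvec (s : ℕ → ℂ) (n : ℕ) : Matrix (Fin n) (Fin 1) ℂ :=
  Matrix.of fun i _ => s (i : ℕ)

/-- The matrix `P̃ = ℙ^s_n + M M^*`. -/
def Ptilde (t0 : ℂ) (s : ℕ → ℂ) (n : ℕ) : Matrix (Fin n) (Fin n) ℂ :=
  Pmat t0 s n + Mvec s n * (Mvec s n)ᴴ

/-- The resolvent-type matrix `(P̃ − z ℙ^s_n T^*)⁻¹`. -/
def resolv (t0 : ℂ) (s : ℕ → ℂ) (n : ℕ) (z : ℂ) : Matrix (Fin n) (Fin n) ℂ :=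
  (Ptilde t0 s n - z • (Pmat t0 s n * (Tmat t0 n)ᴴ))⁻¹

/-- `α = sqrt(1 − M^* P̃⁻¹ M)`. -/
def alphaC (t0 : ℂ) (s : ℕ → ℂ) (n : ℕ) : ℂ :=
  (Real.sqrt (1 - (((Mvec s n)ᴴ * (Ptilde t0 s n)⁻¹ * Mvec s n) 0 0).re) : ℝ)

/-- `β = sqrt(1 − E^* P̃⁻¹ E)`. -/
def betaC (t0 : ℂ) (s : ℕ → ℂ) (n : ℕ) : ℂ :=
  (Real.sqrt (1 - (((Evec n)ᴴ * (Ptilde t0 s n)⁻¹ * Evec n) 0 0).re) : ℝ)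

/-- The rational function `a`. -/
def afun (t0 : ℂ) (s : ℕ → ℂ) (n : ℕ) (z : ℂ) : ℂ :=
  ((Evec n)ᴴ * resolv t0 s n z * Mvec s n) 0 0

/-- The rational function `b`. -/
def bfun (t0 : ℂ) (s : ℕ → ℂ) (n : ℕ) (z : ℂ) : ℂ :=
  betaC t0 s n * (1 - z * ((Evec n)ᴴ * resolv t0 s n z * (Tmat t0 n)⁻¹ * Evec n) 0 0)

/-- The rational function `c`. -/
def cfun (t0 : ℂ) (s : ℕ → ℂ) (n : ℕ) (z : ℂ) : ℂ :=
  alphaC t0 s n * (1 - z * ((Mvec s n)ᴴ * (Tmat t0 n)ᴴ * resolv t0 s n z * Mvec s n) 0 0)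

/-- The rational function `d`. -/
def dfun (t0 : ℂ) (s : ℕ → ℂ) (n : ℕ) (z : ℂ) : ℂ :=
  z * alphaC t0 s n * betaC t0 s n *
    ((Mvec s n)ᴴ * (Pmat t0 s n)⁻¹ * Ptilde t0 s n * resolv t0 s n z * (Tmat t0 n)⁻¹ *
      Evec n) 0 0

/-- Taylor coefficient of `g` at `t0`: `g_j(t0) = g^{(j)}(t0)/j!`. -/
def tcoef (g : ℂ → ℂ) (t0 : ℂ) (j : ℕ) : ℂ :=
  iteratedDeriv j g t0 / (Nat.factorial j : ℂ)

/-- `f ∈ 𝒮` solves the first-order boundary problem at `t0` with data `s0, s1`. -/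
def Sol1 (t0 s0 s1 : ℂ) (f : ℂ → ℂ) : Prop :=
  f ∈ SchurClass ∧
    NTLittleO (fun z => f z - (s0 + s1 * (z - t0))) (fun z => z - t0) t0

/-!
Along the segments `t0 (1 - δ (1 + β i))`, which stay in a Stolz angle, a solution satisfies
`f = s0 - δ s1 t0 (1 + β i) + o(δ)`. Since `|f| ≤ 1`, this forces `|s0| ≤ 1`, and when
`|s0| = 1` it forces `Re ((1 + β i) t0 s1 s̄0) ≥ 0` for every real `β`, i.e. `t0 s1 s̄0 ≥ 0`.

Conversely, the solutions can be taken to be polynomials in `w = t̄0 z`. When `|s0| < 1`, take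
`s0 + (t0 s1 / k) (w^k - 1) + b (w - 1)²` with `k` large and `b` small. When `|s0| = 1` and
`x = t0 s1 s̄0 ≥ 0`, take `s0 (1 - x/k + (x/k) w^k)` with `k > x`. Changing `k` or `b` changes the
value at `0`, so there are two solutions unless `|s0| = 1` and `s1 = 0`.

In that remaining case, Schwarz–Pick at the origin gives
`1 - |f z|² ≥ (1 - |f 0|)/(1 + |f 0|) (1 - |z|²)`. Along the radius, however,
`1 - |f z|² ≤ 2 |f z - s0| = o(1 - |z|)`, so `|f 0| = 1`, and by the maximum modulus principle
`f` is constant.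
-/

lemma mem_unitDisk {z : ℂ} : z ∈ unitDisk ↔ ‖z‖ < 1 := mem_ball_zero_iff

lemma zero_mem_unitDisk : (0 : ℂ) ∈ unitDisk := mem_unitDisk.2 (by simp)

lemma sq_norm_one_sub_conj_mul_sub_sq_norm_sub (a u : ℂ) :
    ‖1 - conj a * u‖ ^ 2 - ‖a - u‖ ^ 2 = (1 - ‖a‖ ^ 2) * (1 - ‖u‖ ^ 2) := by
  simp only [Complex.sq_norm, Complex.normSq_apply, Complex.sub_re, Complex.sub_im,
    Complex.mul_re, Complex.mul_im, Complex.one_re, Complex.one_im, Complex.conj_re,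
    Complex.conj_im]
  ring

lemma one_sub_norm_le_norm_one_sub_conj_mul (a : ℂ) {u : ℂ} (hu : ‖u‖ ≤ 1) :
    1 - ‖a‖ ≤ ‖1 - conj a * u‖ := by
  have := norm_sub_norm_le (1 : ℂ) (conj a * u)
  rw [norm_one, norm_mul, Complex.norm_conj] at this
  nlinarith [norm_nonneg a]

lemma norm_sub_le_norm_one_sub_conj_mul {a u : ℂ} (ha : ‖a‖ ≤ 1) (hu : ‖u‖ ≤ 1) :
    ‖a - u‖ ≤ ‖1 - conj a * u‖ := by
  refine pow_le_pow_iff_left₀ (norm_nonneg _) (norm_nonneg _) two_ne_zero |>.1 ?_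
  have := sq_norm_one_sub_conj_mul_sub_sq_norm_sub a u
  have : 0 ≤ (1 - ‖a‖ ^ 2) * (1 - ‖u‖ ^ 2) :=
    mul_nonneg (by nlinarith [norm_nonneg a]) (by nlinarith [norm_nonneg u])
  linarith

theorem SchurClass.one_sub_sq_norm_le {f : ℂ → ℂ} (hf : f ∈ SchurClass) (ha : ‖f 0‖ < 1)
    {z : ℂ} (hz : z ∈ unitDisk) :
    (1 - ‖f 0‖) / (1 + ‖f 0‖) * (1 - ‖z‖ ^ 2) ≤ 1 - ‖f z‖ ^ 2 := by
  obtain ⟨hfd, hfb⟩ := hf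
  set a := f 0
  have hden0 : ∀ w ∈ unitDisk, 1 - conj a * f w ≠ 0 := fun w hw => norm_pos_iff.1
    ((sub_pos.2 ha).trans_le (one_sub_norm_le_norm_one_sub_conj_mul a (hfb w hw)))
  set F : ℂ → ℂ := fun w => (a - f w) / (1 - conj a * f w)
  have hFd : DifferentiableOn ℂ F unitDisk :=
    ((differentiableOn_const a).sub hfd).div ((differentiableOn_const 1).sub (hfd.const_mul _))
      hden0
  have hFmaps : MapsTo F unitDisk (closedBall 0 1) := fun w hw => by
    rw [mem_closedBall_zero_iff, norm_div, div_le_one (norm_pos_iff.2 (hden0 w hw))]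
    exact norm_sub_le_norm_one_sub_conj_mul ha.le (hfb w hw)
  have hF0 : F 0 = 0 := by simp only [F, a, sub_self, zero_div]
  have hschwarz := Complex.norm_le_norm_of_mapsTo_ball hFd hFmaps hF0 (mem_unitDisk.1 hz)
  set D := ‖1 - conj a * f z‖
  have hD : 1 - ‖a‖ ≤ D := one_sub_norm_le_norm_one_sub_conj_mul a (hfb z hz)
  have hnum : ‖a - f z‖ ≤ ‖z‖ * D := by
    rwa [norm_div, div_le_iff₀ ((sub_pos.2 ha).trans_le hD)] at hschwarz
  have hid := sq_norm_one_sub_conj_mul_sub_sq_norm_sub a (f z)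
  have key : (1 - ‖z‖ ^ 2) * (1 - ‖a‖) ^ 2 ≤ (1 - ‖a‖) * ((1 + ‖a‖) * (1 - ‖f z‖ ^ 2)) := by
    have h1 : (1 - ‖z‖ ^ 2) * D ^ 2 ≤ (1 - ‖a‖ ^ 2) * (1 - ‖f z‖ ^ 2) := by
      nlinarith [mul_le_mul hnum hnum (norm_nonneg _) (by positivity)]
    have h2 : (1 - ‖z‖ ^ 2) * (1 - ‖a‖) ^ 2 ≤ (1 - ‖z‖ ^ 2) * D ^ 2 :=
      mul_le_mul_of_nonneg_left (pow_le_pow_left₀ (sub_nonneg.2 ha.le) hD 2)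
        (by nlinarith [norm_nonneg z, mem_unitDisk.1 hz])
    linarith
  rw [div_mul_eq_mul_div, div_le_iff₀ (by positivity)]
  nlinarith [sub_pos.2 ha, norm_nonneg a]

lemma SchurClass.mul_le_two_mul_norm_sub {f : ℂ → ℂ} {t0 s0 : ℂ} {δ : ℝ} (hf : f ∈ SchurClass)
    (ha : ‖f 0‖ < 1) (ht : ‖t0‖ = 1) (hs0 : ‖s0‖ = 1) (hδ0 : 0 < δ) (hδ1 : δ < 1) :
    (1 - ‖f 0‖) / (1 + ‖f 0‖) * δ ≤ 2 * ‖f (t0 * (1 - δ)) - s0‖ := by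
  set z := t0 * (1 - δ)
  have hz : ‖z‖ = 1 - δ := by
    rw [norm_mul, ht, one_mul, ← Complex.ofReal_one, ← Complex.ofReal_sub, Complex.norm_real,
      Real.norm_of_nonneg (by linarith)]
  have hzmem : z ∈ unitDisk := mem_unitDisk.2 (by rw [hz]; linarith)
  have hsp := SchurClass.one_sub_sq_norm_le hf ha hzmem
  rw [hz] at hsp
  have hfz := hf.2 z hzmem
  have hdist : 1 - ‖f z‖ ≤ ‖f z - s0‖ := by
    simpa [hs0, norm_sub_rev] using norm_sub_norm_le s0 (f z)
  have hc : 0 ≤ (1 - ‖f 0‖) / (1 + ‖f 0‖) := div_nonneg (sub_nonneg.2 ha.le) (by positivity)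
  calc (1 - ‖f 0‖) / (1 + ‖f 0‖) * δ ≤ (1 - ‖f 0‖) / (1 + ‖f 0‖) * (1 - (1 - δ) ^ 2) :=
        mul_le_mul_of_nonneg_left (by nlinarith) hc
    _ ≤ 1 - ‖f z‖ ^ 2 := hsp
    _ ≤ 2 * ‖f z - s0‖ := by nlinarith [norm_nonneg (f z)]

lemma tendsto_stolzAngle_of_re_eq_one {t0 u : ℂ} (ht : ‖t0‖ = 1) (hu : u.re = 1) :
    Tendsto (fun δ : ℝ => t0 * (1 - δ * u)) (𝓝[>] 0)
      (𝓝[stolzAngle t0 (2 * ‖u‖ + 1)] t0) := by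
  refine tendsto_nhdsWithin_iff.2 ⟨?_, ?_⟩
  · have hc : Continuous fun δ : ℝ => t0 * (1 - δ * u) := by fun_prop
    exact (hc.tendsto' 0 t0 (by simp)).mono_left nhdsWithin_le_nhds
  · filter_upwards [Ioo_mem_nhdsGT (show (0 : ℝ) < 1 / (1 + u.im ^ 2) by positivity)]
      with δ ⟨hδ0, hδ1⟩
    rw [lt_div_iff₀ (by positivity)] at hδ1
    set N := ‖1 - δ * u‖
    have hN : N ^ 2 = (1 - δ) ^ 2 + (δ * u.im) ^ 2 := by
      simp only [N, Complex.sq_norm, Complex.normSq_apply, Complex.sub_re, Complex.sub_im,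
        Complex.mul_re, Complex.mul_im, Complex.ofReal_re, Complex.ofReal_im, Complex.one_re,
        Complex.one_im, hu]
      ring
    have hN0 : 0 ≤ N := norm_nonneg _
    have hN1 : N < 1 := by nlinarith
    have hgap : δ / 2 < 1 - N := by nlinarith
    have hzt : ‖t0 * (1 - δ * u) - t0‖ = δ * ‖u‖ := by
      rw [show t0 * (1 - δ * u) - t0 = -t0 * (δ * u) by ring, norm_mul, norm_neg, ht, one_mul,
        norm_mul, Complex.norm_real, Real.norm_of_nonneg hδ0.le]
    have hz : ‖t0 * (1 - δ * u)‖ = N := by rw [norm_mul, ht, one_mul]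
    refine ⟨mem_unitDisk.2 (hz ▸ hN1), ?_⟩
    rw [hzt, hz]
    nlinarith [norm_nonneg u]

lemma eventually_mem_unitDisk_of_re_eq_one {t0 u : ℂ} (ht : ‖t0‖ = 1) (hu : u.re = 1) :
    ∀ᶠ δ : ℝ in 𝓝[>] 0, t0 * (1 - δ * u) ∈ unitDisk :=
  (tendsto_nhdsWithin_iff.1 (tendsto_stolzAngle_of_re_eq_one ht hu)).2.mono fun _ h => h.1

lemma re_conj_mul_sub_nonpos {s v : ℂ} (hs : ‖s‖ = 1) (hv : ‖v‖ ≤ 1) :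
    (conj s * (v - s)).re ≤ 0 := by
  have : conj s * (v - s) = conj s * v - 1 := by rw [mul_sub, Complex.conj_mul', hs]; norm_num
  rw [this, Complex.sub_re, Complex.one_re, sub_nonpos]
  calc (conj s * v).re ≤ ‖conj s * v‖ := Complex.re_le_norm _
    _ = ‖v‖ := by rw [norm_mul, Complex.norm_conj, hs, one_mul]
    _ ≤ 1 := hv

lemma exists_nonneg_eq_ofReal_of_forall_re_mul_nonneg {w : ℂ}
    (h : ∀ β : ℝ, 0 ≤ ((1 + β * I) * w).re) : ∃ x : ℝ, 0 ≤ x ∧ w = x := by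
  have hre : ∀ β : ℝ, ((1 + β * I) * w).re = w.re - β * w.im := fun β => by simp
  have him : w.im = 0 := by
    by_contra hne
    have := h ((w.re + 1) / w.im)
    rw [hre, div_mul_cancel₀ _ hne] at this
    linarith
  exact ⟨w.re, by simpa using h 0, Complex.ext rfl (by simp [him])⟩

namespace Sol1

variable {t0 s0 s1 u : ℂ} {f : ℂ → ℂ}

lemma tendsto_slope (ht : ‖t0‖ = 1) (hu : u.re = 1) (h : Sol1 t0 s0 s1 f) :
    Tendsto (fun δ : ℝ => (f (t0 * (1 - δ * u)) - s0) / δ) (𝓝[>] 0) (𝓝 (-(s1 * t0 * u))) := by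
  have hκ : 1 < 2 * ‖u‖ + 1 := by
    have := Complex.re_le_norm u
    linarith
  have hpath := tendsto_stolzAngle_of_re_eq_one ht hu
  have hO : (fun δ : ℝ => t0 * (1 - δ * u) - t0) =O[𝓝[>] 0] fun δ : ℝ => (δ : ℂ) := by
    simpa only [show ∀ δ : ℂ, t0 * (1 - δ * u) - t0 = -(t0 * u) * δ from fun δ => by ring]
      using (isBigO_refl (fun δ : ℝ => (δ : ℂ)) _).const_mul_left (-(t0 * u))
  have hrem := (((h.2 _ hκ).comp_tendsto hpath).trans_isBigO hO).tendsto_div_nhds_zero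
  rw [← zero_add (-(s1 * t0 * u))]
  refine (hrem.add_const _).congr' ?_
  filter_upwards [self_mem_nhdsWithin] with δ (hδ : 0 < δ)
  have : (δ : ℂ) ≠ 0 := Complex.ofReal_ne_zero.2 hδ.ne'
  simp only [Function.comp_apply]
  field_simp
  ring

lemma tendsto_along (ht : ‖t0‖ = 1) (hu : u.re = 1) (h : Sol1 t0 s0 s1 f) :
    Tendsto (fun δ : ℝ => f (t0 * (1 - δ * u))) (𝓝[>] 0) (𝓝 s0) := by
  have hδ : Tendsto (fun δ : ℝ => (δ : ℂ)) (𝓝[>] 0) (𝓝 0) :=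
    (Complex.continuous_ofReal.tendsto' 0 0 (by simp)).mono_left nhdsWithin_le_nhds
  have := (hδ.mul (h.tendsto_slope ht hu)).const_add s0
  rw [zero_mul, add_zero] at this
  refine this.congr' ?_
  filter_upwards [self_mem_nhdsWithin] with δ (hδ : 0 < δ)
  rw [mul_div_cancel₀ _ (Complex.ofReal_ne_zero.2 hδ.ne'), add_sub_cancel]

lemma norm_le_one (ht : ‖t0‖ = 1) (h : Sol1 t0 s0 s1 f) : ‖s0‖ ≤ 1 :=
  le_of_tendsto (h.tendsto_along ht Complex.one_re).norm <|
    (eventually_mem_unitDisk_of_re_eq_one ht Complex.one_re).mono fun _ hz => h.1.2 _ hz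

lemma exists_nonneg_of_norm_eq_one (ht : ‖t0‖ = 1) (hs0 : ‖s0‖ = 1) (h : Sol1 t0 s0 s1 f) :
    ∃ x : ℝ, 0 ≤ x ∧ t0 * s1 * conj s0 = x := by
  refine exists_nonneg_eq_ofReal_of_forall_re_mul_nonneg fun β => ?_
  have hu : (1 + β * I).re = 1 := by simp
  have hlim := (Complex.continuous_re.tendsto _).comp
    ((h.tendsto_slope ht hu).const_mul (conj s0))
  have hle : ∀ᶠ δ : ℝ in 𝓝[>] 0,
      (conj s0 * ((f (t0 * (1 - δ * (1 + β * I))) - s0) / δ)).re ≤ 0 := by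
    filter_upwards [self_mem_nhdsWithin, eventually_mem_unitDisk_of_re_eq_one ht hu] with δ (hδ : 0 < δ) hz
    rw [mul_div_assoc', Complex.div_ofReal_re]
    exact div_nonpos_of_nonpos_of_nonneg (re_conj_mul_sub_nonpos hs0 (h.1.2 _ hz)) hδ.le
  have := le_of_tendsto hlim hle
  have hring : conj s0 * -(s1 * t0 * (1 + β * I)) = -((1 + β * I) * (t0 * s1 * conj s0)) := by
    ring
  rw [hring, Complex.neg_re] at this
  linarith

lemma norm_apply_zero_eq_one (ht : ‖t0‖ = 1) (hs0 : ‖s0‖ = 1) (h : Sol1 t0 s0 0 f) :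
    ‖f 0‖ = 1 := by
  refine le_antisymm (h.1.2 0 zero_mem_unitDisk) (not_lt.1 fun ha => ?_)
  have hslope : Tendsto (fun δ : ℝ => (f (t0 * (1 - δ)) - s0) / δ) (𝓝[>] 0) (𝓝 0) := by
    simpa using h.tendsto_slope ht Complex.one_re
  have hev : ∀ᶠ δ : ℝ in 𝓝[>] 0,
      (1 - ‖f 0‖) / (1 + ‖f 0‖) ≤ 2 * ‖(f (t0 * (1 - δ)) - s0) / δ‖ := by
    filter_upwards [Ioo_mem_nhdsGT one_pos] with δ ⟨hδ0, hδ1⟩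
    rw [norm_div, Complex.norm_real, Real.norm_of_nonneg hδ0.le, mul_div_assoc',
      le_div_iff₀ hδ0]
    exact SchurClass.mul_le_two_mul_norm_sub h.1 ha ht hs0 hδ0 hδ1
  have := ge_of_tendsto (hslope.norm.const_mul 2) hev
  rw [norm_zero, mul_zero] at this
  exact (div_pos (sub_pos.2 ha) (by positivity)).not_ge this

theorem eqOn_const (ht : ‖t0‖ = 1) (hs0 : ‖s0‖ = 1) (h : Sol1 t0 s0 0 f) :
    EqOn f (fun _ => s0) unitDisk := by
  have hmax : IsMaxOn (norm ∘ f) unitDisk 0 := fun z hz => by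
    simpa [h.norm_apply_zero_eq_one ht hs0] using h.1.2 z hz
  have hconst : EqOn f (Function.const ℂ (f 0)) unitDisk :=
    Complex.eqOn_of_isPreconnected_of_isMaxOn_norm (convex_ball 0 1).isPreconnected isOpen_ball
      h.1.1 zero_mem_unitDisk hmax
  have hf0 : f 0 = s0 := by
    refine tendsto_nhds_unique (tendsto_const_nhds.congr' ?_) (h.tendsto_along ht Complex.one_re)
    filter_upwards [eventually_mem_unitDisk_of_re_eq_one ht Complex.one_re] with δ hz
    exact (hconst hz).symm
  exact fun z hz => (hconst hz).trans hf0

end Sol1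

lemma ntLittleO_of_hasDerivAt {f : ℂ → ℂ} {t0 s1 : ℂ} (hd : HasDerivAt f s1 t0) :
    NTLittleO (fun z => f z - (f t0 + s1 * (z - t0))) (fun z => z - t0) t0 := fun _ _ =>
  ((hasDerivAt_iff_isLittleO.1 hd).mono nhdsWithin_le_nhds).congr_left fun z => by
    rw [smul_eq_mul]; ring

lemma sol1_comp_conj_mul {t0 s0 s1 : ℂ} {P : ℂ → ℂ} (ht : ‖t0‖ = 1) (hP : Differentiable ℂ P)
    (hPb : ∀ w, ‖w‖ ≤ 1 → ‖P w‖ ≤ 1) (hP1 : P 1 = s0) (hPd : HasDerivAt P (t0 * s1) 1) :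
    Sol1 t0 s0 s1 fun z => P (conj t0 * z) := by
  have htt : conj t0 * t0 = 1 := by rw [Complex.conj_mul', ht]; norm_num
  refine ⟨⟨(hP.comp (differentiable_id.const_mul _)).differentiableOn, fun z hz => hPb _ ?_⟩, ?_⟩
  · rw [norm_mul, Complex.norm_conj, ht, one_mul]
    exact (mem_unitDisk.1 hz).le
  · rw [← htt] at hPd
    have hd := hPd.comp t0 ((hasDerivAt_id t0).const_mul (conj t0))
    rw [mul_one, mul_right_comm, mul_comm t0, htt, one_mul] at hd
    simpa only [Function.comp_def, htt, hP1] using ntLittleO_of_hasDerivAt hd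

def boundaryPoly (s0 a b : ℂ) (k : ℕ) (w : ℂ) : ℂ := s0 + a * (w ^ k - 1) + b * (w - 1) ^ 2

section boundaryPoly

variable {s0 a b : ℂ} {k : ℕ}

lemma boundaryPoly_one : boundaryPoly s0 a b k 1 = s0 := by simp [boundaryPoly]

lemma boundaryPoly_zero (hk : k ≠ 0) : boundaryPoly s0 a b k 0 = s0 - a + b := by
  simp [boundaryPoly, zero_pow hk]; ring

lemma differentiable_boundaryPoly : Differentiable ℂ (boundaryPoly s0 a b k) := by
  unfold boundaryPoly; fun_prop

lemma hasDerivAt_boundaryPoly : HasDerivAt (boundaryPoly s0 a b k) (a * k) 1 := by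
  have h : HasDerivAt (fun w : ℂ => s0 + a * (w ^ k - 1) + b * (w - 1) ^ 2)
      (a * (k * 1 ^ (k - 1)) + b * (2 * (1 - 1) ^ (2 - 1) * 1)) 1 :=
    (((hasDerivAt_pow k 1).sub_const 1).const_mul a |>.const_add s0).add
      (((hasDerivAt_id' 1).sub_const 1).pow 2 |>.const_mul b)
  unfold boundaryPoly
  simpa using h

lemma norm_boundaryPoly_le {w : ℂ} (hw : ‖w‖ ≤ 1) :
    ‖boundaryPoly s0 a b k w‖ ≤ ‖s0‖ + 2 * ‖a‖ + 4 * ‖b‖ := by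
  have h1 : ‖w ^ k - 1‖ ≤ 2 := (norm_sub_le _ _).trans (by
    rw [norm_pow, norm_one]; linarith [pow_le_one₀ (norm_nonneg w) hw (n := k)])
  have h2 : ‖(w - 1) ^ 2‖ ≤ 4 := by
    rw [norm_pow]
    nlinarith [norm_sub_le w 1, norm_one (α := ℂ), norm_nonneg (w - 1)]
  calc ‖boundaryPoly s0 a b k w‖ ≤ ‖s0‖ + ‖a‖ * ‖w ^ k - 1‖ + ‖b‖ * ‖(w - 1) ^ 2‖ := by
        unfold boundaryPoly
        refine (norm_add_le _ _).trans ?_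
        rw [norm_mul b]
        linarith [norm_add_le s0 (a * (w ^ k - 1)), norm_mul a (w ^ k - 1)]
    _ ≤ ‖s0‖ + 2 * ‖a‖ + 4 * ‖b‖ := by
        nlinarith [mul_le_mul_of_nonneg_left h1 (norm_nonneg a),
          mul_le_mul_of_nonneg_left h2 (norm_nonneg b)]

-- `s0 ((1 - l) + l w^k)` is `s0` times a convex combination of `1` and `w^k`.
lemma norm_boundaryPoly_le_one_of_norm_eq_one (hs0 : ‖s0‖ = 1) {l : ℝ} (hl0 : 0 ≤ l)
    (hl1 : l ≤ 1) {w : ℂ} (hw : ‖w‖ ≤ 1) : ‖boundaryPoly s0 (s0 * l) 0 k w‖ ≤ 1 := by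
  have : boundaryPoly s0 (s0 * l) 0 k w = s0 * ((1 - l : ℝ) + l * w ^ k) := by
    simp only [boundaryPoly]; push_cast; ring
  rw [this, norm_mul, hs0, one_mul]
  refine (norm_add_le _ _).trans ?_
  rw [Complex.norm_real, norm_mul, Complex.norm_real, norm_pow, Real.norm_of_nonneg (by linarith),
    Real.norm_of_nonneg hl0]
  nlinarith [pow_le_one₀ (norm_nonneg w) hw (n := k)]

end boundaryPoly

lemma sol1_boundaryPoly {t0 s0 s1 b : ℂ} {k : ℕ} (ht : ‖t0‖ = 1)
    (hk : 4 * ‖s1‖ < k * (1 - ‖s0‖)) (hb : 8 * ‖b‖ ≤ 1 - ‖s0‖) :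
    Sol1 t0 s0 s1 fun z => boundaryPoly s0 (t0 * s1 / k) b k (conj t0 * z) := by
  have hkpos : (0 : ℝ) < k := (Nat.cast_nonneg k).lt_of_ne fun h => by
    rw [← h, zero_mul] at hk; linarith [norm_nonneg s1]
  have hkC : (k : ℂ) ≠ 0 := by exact_mod_cast hkpos.ne'
  refine sol1_comp_conj_mul ht differentiable_boundaryPoly (fun w hw => ?_) boundaryPoly_one ?_
  · refine (norm_boundaryPoly_le hw).trans ?_
    have ha : 2 * ‖t0 * s1 / k‖ ≤ (1 - ‖s0‖) / 2 := by
      rw [norm_div, norm_mul, ht, one_mul, Complex.norm_natCast, mul_div_assoc',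
        div_le_div_iff₀ hkpos two_pos]
      linarith
    linarith
  · convert hasDerivAt_boundaryPoly using 1
    field_simp

lemma sol1_boundaryPoly_of_norm_eq_one {t0 s0 s1 : ℂ} {x : ℝ} {k : ℕ} (ht : ‖t0‖ = 1)
    (hs0 : ‖s0‖ = 1) (hx : 0 ≤ x) (hw : t0 * s1 * conj s0 = x) (hk : x < k) :
    Sol1 t0 s0 s1 fun z => boundaryPoly s0 (s0 * (x / k : ℝ)) 0 k (conj t0 * z) := by
  have hkpos : (0 : ℝ) < k := hx.trans_lt hk
  refine sol1_comp_conj_mul ht differentiable_boundaryPoly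
    (fun w hw => norm_boundaryPoly_le_one_of_norm_eq_one hs0 (by positivity)
      ((div_le_one hkpos).2 hk.le) hw) boundaryPoly_one ?_
  convert hasDerivAt_boundaryPoly using 1
  have hss : s0 * conj s0 = 1 := by rw [Complex.mul_conj', hs0]; norm_num
  have hkC : (k : ℂ) ≠ 0 := by exact_mod_cast hkpos.ne'
  push_cast
  rw [mul_assoc, div_mul_cancel₀ _ hkC, ← hw]
  linear_combination (-(t0 * s1)) * hss

lemma exists_sol1_ne_of_norm_lt_one {t0 s0 s1 : ℂ} (ht : ‖t0‖ = 1) (hs0 : ‖s0‖ < 1) :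
    ∃ f g, Sol1 t0 s0 s1 f ∧ Sol1 t0 s0 s1 g ∧ f 0 ≠ g 0 := by
  obtain ⟨k, hk⟩ := exists_nat_gt (4 * ‖s1‖ / (1 - ‖s0‖))
  rw [div_lt_iff₀ (sub_pos.2 hs0)] at hk
  have hk0 : k ≠ 0 := by rintro rfl; simp at hk; linarith [norm_nonneg s1]
  set b : ℂ := (((1 - ‖s0‖) / 8 : ℝ) : ℂ)
  have hb : 8 * ‖b‖ ≤ 1 - ‖s0‖ := by
    rw [Complex.norm_real, Real.norm_of_nonneg (by linarith)]; linarith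
  refine ⟨_, _, sol1_boundaryPoly (b := 0) ht hk (by simpa using hs0.le),
    sol1_boundaryPoly ht hk hb, ?_⟩
  simp only [mul_zero, boundaryPoly_zero hk0]
  have hb0 : b ≠ 0 := Complex.ofReal_ne_zero.2 (div_pos (sub_pos.2 hs0) (by norm_num)).ne'
  intro h
  exact hb0 (by linear_combination -h)

lemma exists_sol1_ne_of_norm_eq_one {t0 s0 s1 : ℂ} {x : ℝ} (ht : ‖t0‖ = 1) (hs0 : ‖s0‖ = 1)
    (hx : 0 < x) (hw : t0 * s1 * conj s0 = x) :
    ∃ f g, Sol1 t0 s0 s1 f ∧ Sol1 t0 s0 s1 g ∧ f 0 ≠ g 0 := by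
  obtain ⟨k, hk⟩ := exists_nat_gt x
  have hk1 : x < (k + 1 : ℕ) := hk.trans (by simp)
  refine ⟨_, _, sol1_boundaryPoly_of_norm_eq_one ht hs0 hx.le hw hk,
    sol1_boundaryPoly_of_norm_eq_one ht hs0 hx.le hw hk1, ?_⟩
  have hkpos : (0 : ℝ) < k := hx.trans hk
  have hs0' : s0 ≠ 0 := by rintro rfl; simp at hs0
  have hk0 : k ≠ 0 := (Nat.cast_pos.1 hkpos).ne'
  simp only [mul_zero, boundaryPoly_zero hk0, boundaryPoly_zero (Nat.succ_ne_zero k)]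
  intro h
  have hdiv : x / (k + 1 : ℕ) < x / k := div_lt_div_of_pos_left hx hkpos (by simp)
  have : ((x / k : ℝ) : ℂ) = ((x / (k + 1 : ℕ) : ℝ) : ℂ) :=
    mul_left_cancel₀ hs0' (by linear_combination -h)
  exact hdiv.ne' (Complex.ofReal_injective this)

lemma exists_sol1_ne {t0 s0 s1 : ℂ} (ht : ‖t0‖ = 1) (hsol : ∃ f, Sol1 t0 s0 s1 f)
    (hne : ¬(‖s0‖ = 1 ∧ s1 = 0)) :
    ∃ f g, Sol1 t0 s0 s1 f ∧ Sol1 t0 s0 s1 g ∧ f 0 ≠ g 0 := by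
  obtain ⟨f, hf⟩ := hsol
  rcases (hf.norm_le_one ht).lt_or_eq with hlt | heq
  · exact exists_sol1_ne_of_norm_lt_one ht hlt
  obtain ⟨x, hx, hw⟩ := hf.exists_nonneg_of_norm_eq_one ht heq
  refine exists_sol1_ne_of_norm_eq_one ht heq (hx.lt_of_ne fun hx0 => hne ⟨heq, ?_⟩) hw
  have ht0 : t0 ≠ 0 := by rintro rfl; simp at ht
  have hs0 : conj s0 ≠ 0 := by rw [map_ne_zero]; rintro rfl; simp at heq
  simpa [← hx0, ht0, hs0] using hw

lemma exists_sol1_iff {t0 s0 s1 : ℂ} (ht : ‖t0‖ = 1) :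
    (∃ f, Sol1 t0 s0 s1 f) ↔
      ‖s0‖ < 1 ∨ (‖s0‖ = 1 ∧ ∃ x : ℝ, 0 ≤ x ∧ t0 * s1 * conj s0 = x) := by
  refine ⟨fun ⟨f, hf⟩ => ?_, ?_⟩
  · exact (hf.norm_le_one ht).lt_or_eq.imp_right fun heq =>
      ⟨heq, hf.exists_nonneg_of_norm_eq_one ht heq⟩
  · rintro (hlt | ⟨heq, x, hx, hw⟩)
    · obtain ⟨f, -, hf, -⟩ := exists_sol1_ne_of_norm_lt_one (s1 := s1) ht hlt
      exact ⟨f, hf⟩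
    · obtain ⟨k, hk⟩ := exists_nat_gt x
      exact ⟨_, sol1_boundaryPoly_of_norm_eq_one ht heq hx hw hk⟩

/-- **Boundary interpolation of order one.** Existence holds iff `|s_0| < 1`, or `|s_0| = 1`
and `t_0 s_1 conj(s_0) ≥ 0`; uniqueness holds iff `|s_0| = 1` and `s_1 = 0`, in which case the
unique solution is the constant `s_0`. -/
theorem bp_order_one (t0 : ℂ) (ht : ‖t0‖ = 1) (s0 s1 : ℂ) :
    ((∃ f, Sol1 t0 s0 s1 f) ↔
      (‖s0‖ < 1 ∨
        (‖s0‖ = 1 ∧ ∃ x : ℝ, 0 ≤ x ∧ t0 * s1 * conj s0 = (x : ℂ)))) ∧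
    ((∃ f, Sol1 t0 s0 s1 f ∧ ∀ g, Sol1 t0 s0 s1 g → Set.EqOn g f unitDisk) ↔
      (‖s0‖ = 1 ∧ s1 = 0)) ∧
    (‖s0‖ = 1 → s1 = 0 →
      ∀ f, Sol1 t0 s0 s1 f → Set.EqOn f (fun _ => s0) unitDisk) := by
  have rigidity : ‖s0‖ = 1 → s1 = 0 → ∀ f, Sol1 t0 s0 s1 f → EqOn f (fun _ => s0) unitDisk := by
    rintro hs0 rfl f hf
    exact hf.eqOn_const ht hs0
  refine ⟨exists_sol1_iff ht, ⟨?_, ?_⟩, rigidity⟩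
  · rintro ⟨f, hf, huniq⟩
    by_contra hne
    obtain ⟨g1, g2, hg1, hg2, hg⟩ := exists_sol1_ne ht ⟨f, hf⟩ hne
    exact hg ((huniq g1 hg1 zero_mem_unitDisk).trans (huniq g2 hg2 zero_mem_unitDisk).symm)
  · rintro ⟨hs0, hs1⟩
    obtain ⟨f, hf⟩ := (exists_sol1_iff (s1 := s1) ht).2 (Or.inr ⟨hs0, 0, le_rfl, by simp [hs1]⟩)
    exact ⟨f, hf, fun g hg =>
      (rigidity hs0 hs1 g hg).trans (rigidity hs0 hs1 f hf).symm⟩
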